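/- Every ordered rooted tree with n edges can be transformed into the star with n edges by a finite sequence of tree rotations and pull operations. -/

import Mathlib

/-- Every prefix has at least as many 1s (`true`) as 0s (`false`). -/
def IsDyckPrefix (x : List Bool) : Prop :=
  ∀ p : List Bool, p <+: x → p.count false ≤ p.count true

/-- A (balanced) Dyck word. -/
def IsDyckWord (x : List Bool) : Prop :=
  x.count true = x.count false ∧ IsDyckPrefix x

/-- A Dyck word of length `2*n` (so with `n` ones). -/
def DyckN (n : ℕ) (x : List Bool) : Prop :=
  x.length = 2 * n ∧ x.count true = n ∧ IsDyckPrefix x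

/-- Cyclic right rotation by `s` steps. -/
def rotR (s : ℕ) (x : List Bool) : List Bool :=
  x.rotate (x.length - s % x.length)

/-- One transformation step on ordered rooted trees (encoded as Dyck words):
either a tree rotation `1u0v ↦ u1v0`, or a pull `110u0v ↦ 101u0v`. -/
def TreeStep (x y : List Bool) : Prop :=
  (∃ u v : List Bool, IsDyckWord u ∧ IsDyckWord v ∧
      x = [true] ++ u ++ [false] ++ v ∧ y = u ++ [true] ++ v ++ [false]) ∨
    (∃ u v : List Bool, IsDyckWord u ∧ IsDyckWord v ∧
      x = [true, true, false] ++ u ++ [false] ++ v ∧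
      y = [true, false, true] ++ u ++ [false] ++ v)

/-!
Split a nonempty Dyck word at its first return, `1u0v`. If `u` is empty, two rotations turn `10v`
into `v10`; if `u = 10b`, a pull followed by those two rotations turns `110b0v` into `1b0v10`;
otherwise `u` starts with `11` and one rotation gives `u1v0`. Unless the word is the star (the only
Dyck words without a factor `00`), the move strictly decreases the pair (number of factors `11`,
position of the first factor `00`) in the lexicographic order.
-/

open Relation

theorem exists_isDyckWord_append_false_cons {y : List Bool} (h : y.count true < y.count false) :
    ∃ u v, IsDyckWord u ∧ y = u ++ false :: v := by
  classical
  -- cut `y` just before the end of its shortest prefix with more `false`s than `true`s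
  have hex : ∃ k, (y.take k).count true < (y.take k).count false := ⟨y.length, by simpa⟩
  have hmin : ∀ j < Nat.find hex, (y.take j).count false ≤ (y.take j).count true :=
    fun j hj => not_lt.1 (Nat.find_min hex hj)
  obtain ⟨j, hj⟩ : ∃ j, Nat.find hex = j + 1 :=
    Nat.exists_eq_succ_of_ne_zero fun h0 => by simpa [h0] using Nat.find_spec hex
  have hdef := Nat.find_spec hex
  rw [hj] at hdef hmin
  have hjy : j < y.length := by
    by_contra hle
    have := hmin j (by omega)
    rw [List.take_of_length_le (by omega)] at this hdef
    omega
  have hprev := hmin j (by omega)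
  rw [List.take_succ_eq_append_getElem hjy] at hdef
  refine ⟨y.take j, y.drop (j + 1), ⟨?_, fun p hp => ?_⟩, ?_⟩
  · cases hyj : y[j] <;> simp [hyj] at hdef <;> omega
  · rw [List.prefix_iff_eq_take.mp (hp.trans (y.take_prefix j))]
    exact hmin _ (by have := hp.length_le; simp at this; omega)
  · cases hyj : y[j] <;> simp [hyj] at hdef
    · rw [← hyj, List.getElem_cons_drop, List.take_append_drop]
    · omega

namespace IsDyckWord

theorem nil : IsDyckWord [] := ⟨rfl, fun p hp => by simp [List.prefix_nil.mp hp]⟩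

theorem append {u v : List Bool} (hu : IsDyckWord u) (hv : IsDyckWord v) :
    IsDyckWord (u ++ v) := by
  refine ⟨by simp [List.count_append, hu.1, hv.1], fun p hp => ?_⟩
  obtain ⟨m, rfl⟩ : ∃ m, p = u.take m ++ v.take (m - u.length) :=
    ⟨p.length, by rw [← List.take_append, ← List.prefix_iff_eq_take.mp hp]⟩
  have hu' := hu.2 _ (u.take_prefix m)
  have hv' := hv.2 _ (v.take_prefix (m - u.length))
  simp only [List.count_append]
  omega

theorem node {u v : List Bool} (hu : IsDyckWord u) (hv : IsDyckWord v) :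
    IsDyckWord (true :: u ++ false :: v) := by
  refine ⟨by simp [List.count_append, hu.1, hv.1]; omega, fun p hp => ?_⟩
  rcases p with _ | ⟨c, q⟩
  · simp
  obtain ⟨rfl, hq⟩ := List.cons_prefix_cons.mp (by simpa only [List.cons_append] using hp)
  obtain ⟨m, rfl⟩ : ∃ m, q = u.take m ++ (false :: v).take (m - u.length) :=
    ⟨q.length, by rw [← List.take_append, ← List.prefix_iff_eq_take.mp hq]⟩
  have hu' := hu.2 _ (u.take_prefix m)
  rcases hm : m - u.length with _ | k
  · simp
    omega
  · have hv' := hv.2 _ (v.take_prefix k)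
    rw [List.take_of_length_le (l := u) (by omega)]
    simp [hu.1]
    omega

theorem eq_nil_or_eq_node {x : List Bool} (hx : IsDyckWord x) :
    x = [] ∨ ∃ u v, IsDyckWord u ∧ IsDyckWord v ∧ x = true :: u ++ false :: v := by
  rcases x with _ | ⟨b, y⟩
  · exact Or.inl rfl
  obtain rfl : b = true := by
    have := hx.2 [b] (List.cons_prefix_cons.mpr ⟨rfl, List.nil_prefix⟩)
    cases b <;> simp_all
  have hbal := hx.1
  simp at hbal
  obtain ⟨u, v, hu, rfl⟩ := exists_isDyckWord_append_false_cons (y := y) (by omega)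
  refine Or.inr ⟨u, v, hu, ⟨?_, fun q hq => ?_⟩, rfl⟩
  · simp [List.count_append, hu.1] at hbal
    omega
  · have := hx.2 (true :: u ++ false :: q) (by simpa using hq)
    simp [List.count_append, hu.1] at this
    omega

theorem eq_nil_or_eq_append_false {x : List Bool} (hx : IsDyckWord x) :
    x = [] ∨ ∃ x', x = x' ++ [false] := by
  rcases List.eq_nil_or_concat' x with rfl | ⟨x', b, rfl⟩
  · exact Or.inl rfl
  cases b
  · exact Or.inr ⟨x', rfl⟩
  · have hpre := hx.2 x' (List.prefix_append _ _)
    have hbal := hx.1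
    simp at hbal
    omega

theorem getLast?_ne_some_true {x : List Bool} (hx : IsDyckWord x) : x.getLast? ≠ some true := by
  rcases hx.eq_nil_or_eq_append_false with rfl | ⟨x', rfl⟩ <;> simp

theorem head?_eq_some_true {x : List Bool} (hx : IsDyckWord x) (hne : x ≠ []) :
    x.head? = some true := by
  rcases hx.eq_nil_or_eq_node with rfl | ⟨u, v, -, -, rfl⟩
  · exact absurd rfl hne
  · simp

end IsDyckWord

def starWord (n : ℕ) : List Bool := (List.replicate n [true, false]).flatten

theorem starWord_succ (n : ℕ) : starWord (n + 1) = true :: false :: starWord n := by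
  simp [starWord, List.replicate_succ]

theorem IsDyckWord.eq_starWord_of_not_infix {x : List Bool} (hx : IsDyckWord x)
    (hff : ¬ [false, false] <:+: x) : x = starWord (x.count true) := by
  rcases hx.eq_nil_or_eq_node with rfl | ⟨u, v, hu, hv, rfl⟩
  · rfl
  rcases hu.eq_nil_or_eq_append_false with rfl | ⟨u', rfl⟩
  · have hv : v = starWord (v.count true) := hv.eq_starWord_of_not_infix fun h =>
      hff <| h.trans (List.suffix_append [true, false] v).isInfix
    simp [starWord_succ, ← hv]
  · exact absurd ⟨true :: u', v, by simp⟩ hff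
termination_by x.length
decreasing_by subst_vars; simp

def countTT : List Bool → ℕ
  | [] => 0
  | a :: l => countTT l + if a = true ∧ l.head? = some true then 1 else 0

def firstFF : List Bool → ℕ
  | [] => 0
  | a :: l => if a = false ∧ l.head? = some false then 0 else firstFF l + 1

theorem countTT_append {l : List Bool} (hl : l.getLast? ≠ some true) (m : List Bool) :
    countTT (l ++ m) = countTT l + countTT m := by
  induction l with
  | nil => simp [countTT]
  | cons a l ih =>
    rcases l with _ | ⟨b, l⟩
    · cases a <;> simp_all [countTT]
    · have := ih (by simpa using hl)
      simp_all [countTT]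
      omega

theorem firstFF_append {l : List Bool} (hl : [false, false] <:+: l) (m : List Bool) :
    firstFF (l ++ m) = firstFF l := by
  induction l with
  | nil => simp at hl
  | cons a l ih =>
    rcases l with _ | ⟨b, l⟩
    · simpa using hl.length_le
    · by_cases hab : a = false ∧ b = false
      · simp [firstFF, hab]
      · have hl' : [false, false] <:+: b :: l := by
          refine (List.infix_cons_iff.mp hl).resolve_left fun h => hab ?_
          simpa [eq_comm] using h
        have hcons (t : List Bool) : firstFF (a :: b :: t) = firstFF (b :: t) + 1 := by
          rw [firstFF]; simp [hab]
        rw [List.cons_append, List.cons_append, hcons, ← List.cons_append, ih hl', hcons]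

def potential (x : List Bool) : ℕ ×ₗ ℕ := toLex (countTT x, firstFF x)

theorem potential_shift_lt {w : List Bool} (hw : IsDyckWord w) (hff : [false, false] <:+: w) :
    potential (w ++ [true, false]) < potential (true :: false :: w) := by
  have hhead := hw.head?_eq_some_true (by rintro rfl; simp at hff)
  rw [potential, potential, Prod.Lex.toLex_lt_toLex]
  right
  constructor
  · simp [countTT_append hw.getLast?_ne_some_true, countTT]
  · simp [firstFF_append hff, firstFF, hhead]

theorem potential_pull_shift_lt {b v : List Bool} (hb : IsDyckWord b) (hv : IsDyckWord v) :
    potential ((true :: b ++ false :: v) ++ [true, false]) <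
      potential (true :: true :: false :: (b ++ false :: v)) := by
  rw [potential, potential, Prod.Lex.toLex_lt_toLex]
  rcases hb.eq_nil_or_eq_append_false with rfl | ⟨b', hb'⟩
  · left
    simp [countTT, countTT_append hv.getLast?_ne_some_true]
  · right
    have hhead := hb.head?_eq_some_true (by simp [hb'])
    have hff : [false, false] <:+: b ++ false :: v := ⟨b', v, by simp [hb']⟩
    constructor
    · simp [countTT, countTT_append hb.getLast?_ne_some_true,
        countTT_append hv.getLast?_ne_some_true, hhead]
    · have h := firstFF_append hff [true, false]
      simp only [List.append_assoc, List.cons_append] at h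
      simp [firstFF, hhead, h]

theorem potential_rotate_lt {u v : List Bool} (hu : IsDyckWord u) (hff : [false, false] <:+: u)
    (hv : IsDyckWord v) :
    potential (u ++ true :: (v ++ [false])) < potential (true :: u ++ false :: v) := by
  have hhead := hu.head?_eq_some_true (by rintro rfl; simp at hff)
  rw [potential, potential, Prod.Lex.toLex_lt_toLex]
  by_cases hv0 : v = []
  · left
    simp [hv0, countTT, countTT_append hu.getLast?_ne_some_true, hhead]
  · right
    constructor
    · simp [countTT, countTT_append hu.getLast?_ne_some_true,
        countTT_append hv.getLast?_ne_some_true, hhead, hv.head?_eq_some_true hv0]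
      omega
    · simp [firstFF, firstFF_append hff, hhead]

namespace TreeStep

theorem rotate {u v : List Bool} (hu : IsDyckWord u) (hv : IsDyckWord v) :
    TreeStep (true :: u ++ false :: v) (u ++ true :: (v ++ [false])) :=
  Or.inl ⟨u, v, hu, hv, by simp, by simp⟩

theorem pull {u v : List Bool} (hu : IsDyckWord u) (hv : IsDyckWord v) :
    TreeStep (true :: true :: false :: (u ++ false :: v))
      (true :: false :: true :: (u ++ false :: v)) :=
  Or.inr ⟨u, v, hu, hv, by simp, by simp⟩

theorem reflTransGen_shift {w : List Bool} (hw : IsDyckWord w) :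
    ReflTransGen TreeStep (true :: false :: w) (w ++ [true, false]) := by
  have h₁ : TreeStep (true :: false :: w) (true :: w ++ [false]) := by
    simpa using rotate IsDyckWord.nil hw
  have h₂ : TreeStep (true :: w ++ [false]) (w ++ [true, false]) := by
    simpa using rotate hw IsDyckWord.nil
  exact .head h₁ (.single h₂)

end TreeStep

theorem IsDyckWord.exists_reflTransGen_potential_lt {x : List Bool} (hx : IsDyckWord x)
    (hne : x ≠ starWord (x.count true)) :
    ∃ y, IsDyckWord y ∧ y.count true = x.count true ∧ ReflTransGen TreeStep x y ∧
      potential y < potential x := by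
  rcases hx.eq_nil_or_eq_node with rfl | ⟨u, v, hu, hv, rfl⟩
  · exact absurd rfl hne
  have hleaf : IsDyckWord [true, false] := IsDyckWord.nil.node IsDyckWord.nil
  rcases hu.eq_nil_or_eq_node with rfl | ⟨a, b, ha, hb, rfl⟩
  · have hff : [false, false] <:+: v := by
      by_contra hff
      exact hne (by simpa [starWord_succ] using hv.eq_starWord_of_not_infix hff)
    exact ⟨v ++ [true, false], hv.append hleaf, by simp,
      TreeStep.reflTransGen_shift hv, potential_shift_lt hv hff⟩
  rcases ha.eq_nil_or_eq_append_false with rfl | ⟨a', rfl⟩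
  · have hw := hb.node hv
    exact ⟨_, hw.append hleaf, by simp; omega,
      .head (TreeStep.pull hb hv) (TreeStep.reflTransGen_shift hw), potential_pull_shift_lt hb hv⟩
  · have hu := ha.node hb
    exact ⟨_, hu.append (hv.node IsDyckWord.nil), by simp; omega, .single (TreeStep.rotate hu hv),
      potential_rotate_lt hu ⟨true :: a', b, by simp⟩ hv⟩

theorem IsDyckWord.reflTransGen_starWord {x : List Bool} (hx : IsDyckWord x) :
    ReflTransGen TreeStep x (starWord (x.count true)) := by
  by_cases hstar : x = starWord (x.count true)
  · exact hstar ▸ .refl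
  obtain ⟨y, hy, hcount, hxy, hlt⟩ := hx.exists_reflTransGen_potential_lt hstar
  exact hxy.trans (hcount ▸ hy.reflTransGen_starWord)
termination_by potential x
decreasing_by exact hlt

theorem DyckN.isDyckWord {n : ℕ} {x : List Bool} (hx : DyckN n x) : IsDyckWord x :=
  ⟨by have := x.count_true_add_count_false; have := hx.1; have := hx.2.1; omega, hx.2.2⟩

/-- every ordered rooted tree with `n` edges (Dyck word of length
`2n`) can be transformed into the star with `n` edges (the Dyck word `(10)^n`)
by a finite sequence of tree rotations and pulls. -/
theorem tree_to_star (n : ℕ) (x : List Bool) (hx : DyckN n x) :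
    Relation.ReflTransGen TreeStep x (List.flatten (List.replicate n [true, false])) := by
  simpa [starWord, hx.2.1] using hx.isDyckWord.reflTransGen_starWord
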